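/- Multi-criteria greedy segmentation is minimal: let T = v_0 … v_{k−1} be a trajectory such that every single-edge subtrajectory T(i, i+1) is preference-optimal. Define the greedy preference segmentation of T recursively: its first index after 0 is the largest b such that the prefix T(0, b) is preference-optimal, and its remaining indices are those of the greedy preference segmentation of T(b, k−1). Then the greedy preference segmentation is a preference segmentation of T, and its number of segments is minimal among all preference segmentations of T. -/
import Mathlib


open scoped NNReal

variable {V : Type*}

/-- `f 0, f 1, …, f m` is a trajectory in the graph with edge relation `E`. -/
def IsTrajE (E : V → V → Prop) (m : ℕ) (f : ℕ → V) : Prop :=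
  ∀ i < m, E (f i) (f (i + 1))

/-- The `α`-cost of the trajectory `f 0, …, f m`: `∑ j, α j` times the `j`-th
coordinate of its cost vector `∑_{i<m} c (f i) (f (i+1))`. -/
noncomputable def aCost {d : ℕ} (c : V → V → Fin d → ℝ≥0) (α : Fin d → ℝ)
    (m : ℕ) (f : ℕ → V) : ℝ :=
  ∑ j, α j * ∑ i ∈ Finset.range m, (c (f i) (f (i + 1)) j : ℝ)

/-- The trajectory `f 0, …, f m` is `α`-optimal: it is a trajectory whose `α`-cost is at
most the `α`-cost of every trajectory with the same endpoints. -/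
def AOpt {d : ℕ} (E : V → V → Prop) (c : V → V → Fin d → ℝ≥0) (α : Fin d → ℝ)
    (m : ℕ) (f : ℕ → V) : Prop :=
  IsTrajE E m f ∧ ∀ (m' : ℕ) (f' : ℕ → V), f' 0 = f 0 → f' m' = f m →
    IsTrajE E m' f' → aCost c α m f ≤ aCost c α m' f'

/-- The trajectory `f 0, …, f m` is preference-optimal: it is `α`-optimal for
some `α` in the standard simplex. -/
def PrefOpt {d : ℕ} (E : V → V → Prop) (c : V → V → Fin d → ℝ≥0)
    (m : ℕ) (f : ℕ → V) : Prop :=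
  ∃ α ∈ stdSimplex ℝ (Fin d), AOpt E c α m f

/-- The subtrajectory `T(i, j)` of the trajectory given by `f` is preference-optimal. -/
def PrefSegOpt {d : ℕ} (E : V → V → Prop) (c : V → V → Fin d → ℝ≥0)
    (f : ℕ → V) (i j : ℕ) : Prop :=
  PrefOpt E c (j - i) (fun l => f (i + l))

/-- The next greedy index after `i`: the largest `x ≤ k - 1` such that the
subtrajectory `T(i, x)` is preference-optimal (and `x > i`). -/
noncomputable def pGreedyNext {d : ℕ} (E : V → V → Prop) (c : V → V → Fin d → ℝ≥0)
    (f : ℕ → V) (k i : ℕ) : ℕ :=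
  @Nat.findGreatest (fun x => i < x ∧ PrefSegOpt E c f i x) (Classical.decPred _) (k - 1)

/-- The indices of the greedy preference segmentation of the trajectory `f 0, …, f (k-1)`. -/
noncomputable def pGreedySeq {d : ℕ} (E : V → V → Prop) (c : V → V → Fin d → ℝ≥0)
    (f : ℕ → V) (k : ℕ) : ℕ → ℕ
  | 0 => 0
  | l + 1 => pGreedyNext E c f k (pGreedySeq E c f k l)

/-- `b 0 = 0 < b 1 < … < b B = k - 1` is a preference segmentation of the trajectory
`f 0, …, f (k-1)` into `B` preference-optimal segments. -/
def IsPrefSeg {d : ℕ} (E : V → V → Prop) (c : V → V → Fin d → ℝ≥0)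
    (f : ℕ → V) (k B : ℕ) (b : ℕ → ℕ) : Prop :=
  b 0 = 0 ∧ b B = k - 1 ∧ (∀ l < B, b l < b (l + 1)) ∧
    ∀ l < B, PrefSegOpt E c f (b l) (b (l + 1))

lemma aCost_congr {d : ℕ} (c : V → V → Fin d → ℝ≥0) (α : Fin d → ℝ) {m : ℕ} {f g : ℕ → V}
    (h : ∀ l ≤ m, f l = g l) : aCost c α m f = aCost c α m g := by
  unfold aCost
  congr 1; funext j; congr 1
  apply Finset.sum_congr rfl
  intro i hi
  simp only [Finset.mem_range] at hi
  rw [h i (by omega), h (i+1) (by omega)]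

lemma isTrajE_congr {E : V → V → Prop} {m : ℕ} {f g : ℕ → V}
    (h : ∀ l ≤ m, f l = g l) (ht : IsTrajE E m f) : IsTrajE E m g := by
  intro i hi
  rw [← h i (by omega), ← h (i+1) (by omega)]
  exact ht i hi

lemma aCost_add {d : ℕ} (c : V → V → Fin d → ℝ≥0) (α : Fin d → ℝ) (a b : ℕ) (f : ℕ → V) :
    aCost c α (a + b) f = aCost c α a f + aCost c α b (fun l => f (a + l)) := by
  unfold aCost
  rw [← Finset.sum_add_distrib]
  congr 1; funext j
  rw [Finset.sum_range_add, mul_add]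
  have hc : ∀ x ∈ Finset.range b, (c (f (a + x)) (f (a + x + 1)) j : ℝ)
      = ((c ((fun l => f (a + l)) x) ((fun l => f (a + l)) (x + 1)) j : ℝ)) := by
    intro x _
    rfl
  rw [Finset.sum_congr rfl hc]

lemma AOpt_congr {d : ℕ} {E : V → V → Prop} {c : V → V → Fin d → ℝ≥0} {α : Fin d → ℝ}
    {m : ℕ} {f g : ℕ → V} (hfg : ∀ l ≤ m, f l = g l) (h : AOpt E c α m f) :
    AOpt E c α m g := by
  constructor
  · exact isTrajE_congr hfg h.1
  · intro m' f' h0 hm' ht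
    rw [← aCost_congr c α hfg]
    exact h.2 m' f' (h0.trans (hfg 0 (by omega)).symm) (hm'.trans (hfg m le_rfl).symm) ht

lemma AOpt_sub {d : ℕ} {E : V → V → Prop} {c : V → V → Fin d → ℝ≥0} {α : Fin d → ℝ}
    {m : ℕ} {f : ℕ → V} (h : AOpt E c α m f) {i j : ℕ} (hij : i ≤ j) (hjm : j ≤ m) :
    AOpt E c α (j - i) (fun l => f (i + l)) := by
  constructor
  · intro l hl
    exact h.1 (i + l) (by omega)
  · intro m' f' h0 hm' htraj'
    simp only at h0 hm'
    set g : ℕ → V := fun l => if l < i then f l else if l ≤ i + m' then f' (l - i) else f (l - i - m' + j) with hg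
    have hgf : ∀ l ≤ i, g l = f l := by
      intro l hl
      rcases Nat.lt_or_ge l i with hli | hli
      · simp only [hg]; rw [if_pos hli]
      · have hli' : l = i := by omega
        subst hli'
        simp only [hg]
        rw [if_neg (by omega), if_pos (by omega), Nat.sub_self]
        rw [h0]
        congr 1
    have hgmid : ∀ l ≤ m', g (i + l) = f' l := by
      intro l hl
      simp only [hg]
      rw [if_neg (by omega), if_pos (by omega)]
      congr 1; omega
    have hgsuf : ∀ l ≤ m - j, g (i + m' + l) = f (j + l) := by
      intro l hl
      by_cases hl0 : l = 0
      · subst hl0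
        have := hgmid m' le_rfl
        rw [add_zero, this, hm']
        congr 1; omega
      · simp only [hg]
        rw [if_neg (by omega), if_neg (by omega)]
        congr 1; omega
    have hgtraj : IsTrajE E (i + m' + (m - j)) g := by
      intro l hl
      by_cases h1 : l < i
      · rw [hgf l (by omega), hgf (l+1) (by omega)]
        exact h.1 l (by omega)
      · by_cases h2 : l < i + m'
        · have hv1 : g l = f' (l - i) := by
            conv_lhs => rw [show l = i + (l - i) by omega]
            exact hgmid _ (by omega)
          have hv2 : g (l + 1) = f' (l - i + 1) := by
            conv_lhs => rw [show l + 1 = i + (l - i + 1) by omega]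
            exact hgmid _ (by omega)
          rw [hv1, hv2]
          exact htraj' (l - i) (by omega)
        · have hv1 : g l = f (j + (l - i - m')) := by
            conv_lhs => rw [show l = i + m' + (l - i - m') by omega]
            exact hgsuf _ (by omega)
          have hv2 : g (l + 1) = f (j + (l - i - m') + 1) := by
            conv_lhs => rw [show l + 1 = i + m' + (l - i - m' + 1) by omega]
            rw [hgsuf _ (by omega)]
            rfl
          rw [hv1, hv2]
          exact h.1 (j + (l - i - m')) (by omega)
    have h0' : g 0 = f 0 := hgf 0 (by omega)
    have hM : g (i + m' + (m - j)) = f m := by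
      rw [hgsuf (m - j) le_rfl]; congr 1; omega
    have key := h.2 (i + m' + (m - j)) g h0' hM hgtraj
    have hm_eq : m = i + (j - i) + (m - j) := by omega
    have splitf : aCost c α m f
        = aCost c α i f + aCost c α (j - i) (fun l => f (i + l))
          + aCost c α (m - j) (fun l => f (j + l)) := by
      conv_lhs => rw [hm_eq]
      rw [aCost_add, aCost_add]
      congr 1
      apply aCost_congr
      intro l _
      show f (i + (j - i) + l) = f (j + l)
      congr 1
      omega
    have splitg : aCost c α (i + m' + (m - j)) g
        = aCost c α i f + aCost c α m' f' + aCost c α (m - j) (fun l => f (j + l)) := by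
      rw [aCost_add, aCost_add]
      congr 1
      · congr 1
        · exact aCost_congr _ _ fun l hl => (hgf l hl)
        · exact aCost_congr _ _ fun l hl => (hgmid l hl)
      · exact aCost_congr _ _ fun l hl => (hgsuf l hl)
    rw [splitf, splitg] at key
    linarith

lemma PrefSegOpt_sub {d : ℕ} {E : V → V → Prop} {c : V → V → Fin d → ℝ≥0}
    {f : ℕ → V} {a b a' b' : ℕ} (h : PrefSegOpt E c f a b)
    (h1 : a ≤ a') (h2 : a' ≤ b') (h3 : b' ≤ b) : PrefSegOpt E c f a' b' := by
  obtain ⟨α, hα, hopt⟩ := h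
  refine ⟨α, hα, ?_⟩
  have hsub := AOpt_sub hopt (i := a' - a) (j := b' - a) (by omega) (by omega)
  have e : b' - a - (a' - a) = b' - a' := by omega
  rw [e] at hsub
  refine AOpt_congr ?_ hsub
  intro l _
  show f (a + (a' - a + l)) = f (a' + l)
  congr 1
  omega

/-- Multi-criteria greedy segmentation is minimal: if every single-edge subtrajectory of
`T` is preference-optimal, the greedy preference segmentation is a preference
segmentation of `T` with a minimal number of segments. -/
theorem pref_greedy_segmentation_is_minimal [Fintype V]
    (E : V → V → Prop) (d : ℕ) (hd : 1 ≤ d) (c : V → V → Fin d → ℝ≥0)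
    (k : ℕ) (hk : 1 ≤ k) (f : ℕ → V)
    (htraj : IsTrajE E (k - 1) f)
    (hedges : ∀ i < k - 1, PrefSegOpt E c f i (i + 1)) :
    ∃ B, IsPrefSeg E c f k B (pGreedySeq E c f k) ∧
      ∀ B' (b' : ℕ → ℕ), IsPrefSeg E c f k B' b' → B ≤ B' := by
  classical
  set n := k - 1 with hn
  set b := pGreedySeq E c f k with hbdef
  have hb0 : b 0 = 0 := rfl
  have hbsucc : ∀ l, b (l + 1) = pGreedyNext E c f k (b l) := fun l => rfl
  have hnext_le : ∀ i, pGreedyNext E c f k i ≤ n := by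
    intro i
    exact @Nat.findGreatest_le (fun x => i < x ∧ PrefSegOpt E c f i x)
      (Classical.decPred _) (k - 1)
  have hnext_lt : ∀ i < n, i < pGreedyNext E c f k i ∧
      PrefSegOpt E c f i (pGreedyNext E c f k i) := by
    intro i hi
    exact @Nat.findGreatest_spec (i + 1) (fun x => i < x ∧ PrefSegOpt E c f i x)
      (Classical.decPred _) (k - 1) (by omega) ⟨by omega, hedges i hi⟩
  have hnext_ge : ∀ i x, x ≤ n → i < x → PrefSegOpt E c f i x →
      x ≤ pGreedyNext E c f k i := by
    intro i x hx hix hseg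
    exact @Nat.le_findGreatest x (fun x => i < x ∧ PrefSegOpt E c f i x)
      (Classical.decPred _) (k - 1) hx ⟨hix, hseg⟩
  have hble : ∀ l, b l ≤ n := by
    intro l
    cases l with
    | zero => rw [hb0]; omega
    | succ l => rw [hbsucc]; exact hnext_le _
  have hexists : ∃ l, b l = n := by
    have key : ∀ l, (∃ l' ≤ l, b l' = n) ∨ l ≤ b l := by
      intro l
      induction l with
      | zero =>
        by_cases h0 : n = 0
        · exact Or.inl ⟨0, le_rfl, by rw [hb0, h0]⟩
        · exact Or.inr (by omega)
      | succ l ih =>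
        rcases ih with ⟨l', hl', hbl'⟩ | hle
        · exact Or.inl ⟨l', by omega, hbl'⟩
        · by_cases hbn : b l = n
          · exact Or.inl ⟨l, by omega, hbn⟩
          · have hlt : b l < n := lt_of_le_of_ne (hble l) hbn
            have := (hnext_lt (b l) hlt).1
            rw [← hbsucc] at this
            exact Or.inr (by omega)
    rcases key n with ⟨l', _, hbl'⟩ | hle
    · exact ⟨l', hbl'⟩
    · exact ⟨n, le_antisymm (hble n) hle⟩
  set B := Nat.find hexists with hBdef
  have hBn : b B = n := Nat.find_spec hexists
  have hBmin : ∀ l < B, b l ≠ n := fun l hl => Nat.find_min hexists hl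
  have hblt : ∀ l < B, b l < n := fun l hl => lt_of_le_of_ne (hble l) (hBmin l hl)
  refine ⟨B, ⟨hb0, hBn, ?_, ?_⟩, ?_⟩
  · intro l hl
    rw [hbsucc]
    exact (hnext_lt (b l) (hblt l hl)).1
  · intro l hl
    rw [hbsucc]
    exact (hnext_lt (b l) (hblt l hl)).2
  · rintro B' b' ⟨h0', hB', hlt', hopt'⟩
    have hb'le : ∀ l ≤ B', b' l ≤ n := by
      have aux : ∀ t, b' (B' - t) ≤ n := by
        intro t
        induction t with
        | zero => rw [Nat.sub_zero, hB']
        | succ t ih =>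
          by_cases h : B' ≤ t
          · rw [show B' - (t + 1) = B' - t by omega]; exact ih
          · have hstep := hlt' (B' - (t + 1)) (by omega)
            rw [show B' - (t + 1) + 1 = B' - t by omega] at hstep
            omega
      intro l hl
      have := aux (B' - l)
      rwa [show B' - (B' - l) = l by omega] at this
    have hdom : ∀ l ≤ B', B ≤ l ∨ b' l ≤ b l := by
      intro l
      induction l with
      | zero => intro _; right; rw [h0', hb0]
      | succ l ih =>
        intro hl
        rcases ih (by omega) with hB | hle
        · left; omega
        · by_cases hBl : B ≤ l
          · left; omega
          · have hlB : l < B := by omega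
            have hbln : b l < n := hblt l hlB
            by_cases hcase : b' (l + 1) ≤ b l
            · right
              have := (hnext_lt (b l) hbln).1
              rw [← hbsucc] at this
              omega
            · right
              have seg := hopt' l (by omega)
              have seg2 := PrefSegOpt_sub seg hle (by omega) le_rfl
              rw [hbsucc]
              exact hnext_ge (b l) (b' (l + 1)) (hb'le (l + 1) hl) (by omega) seg2
    rcases hdom B' le_rfl with hB | hle
    · exact hB
    · by_contra hcon
      have hB'B : B' < B := by omega
      have := hblt B' hB'B
      rw [hB'] at hle
      omega
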